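/- Let S be an additively divisible semiring (commutative, possibly without neutral elements) generated by a single element w. If w^m has finite order for some m ≥ 1, then S is additively idempotent. -/

import Mathlib

/-- `nmul n a` is the `n`-fold sum `a + ⋯ + a` (for `n ≥ 1`; `nmul 0 a = a` is junk). -/
def nmul {S : Type*} [Add S] (n : ℕ) (a : S) : S :=
  Nat.rec a (fun _ b => b + a) (n - 1)

/-- `npow1 m a` is the `m`-fold product `a * ⋯ * a` (for `m ≥ 1`; `npow1 0 a = a` is junk). -/
def npow1 {S : Type*} [Mul S] (m : ℕ) (a : S) : S :=
  Nat.rec a (fun _ b => b * a) (m - 1)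

/-- The subsemiring generated by `A`: the smallest subset of `S` containing `A`
and closed under addition and multiplication. -/
def genClosure {S : Type*} [Add S] [Mul S] (A : Set S) : Set S :=
  ⋂₀ {T : Set S | A ⊆ T ∧ (∀ x ∈ T, ∀ y ∈ T, x + y ∈ T) ∧ (∀ x ∈ T, ∀ y ∈ T, x * y ∈ T)}

/-! Let `x = w ^ m` with `(k + d) • x = k • x`. Dividing, `w = (k d) • b` and
`x = (k d) ^ m • b ^ m`; now `b ^ m` is a sum of powers `w ^ e` with `e ≥ m`, which all inherit the
periodicity of `x`, and `d ∣ (k d) ^ m ≥ k`, so `x + x = x`.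
Idempotency then descends from the powers `w ^ e`, `e > δ`, to `w ^ δ`: writing `w = 2 • b`, the
element `b ^ δ` is either idempotent or satisfies `b ^ δ + b ^ δ = n • w ^ δ + b ^ δ`, and then
`w ^ δ + w ^ δ = (2 ^ δ n + 1) • w ^ δ`, so `w ^ δ` has finite order and the first step applies.
Finally `S` is additively spanned by the powers of `w`. -/

section Multiples

variable {S : Type*}

section AddSemigroup

variable [AddSemigroup S]

theorem nmul_one (a : S) : nmul 1 a = a := rfl

theorem nmul_two (a : S) : nmul 2 a = a + a := rfl

theorem nmul_add_two (n : ℕ) (a : S) : nmul (n + 2) a = nmul (n + 1) a + a := rfl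

theorem nmul_succ {n : ℕ} (hn : 1 ≤ n) (a : S) : nmul (n + 1) a = nmul n a + a := by
  obtain ⟨n, rfl⟩ := Nat.exists_eq_add_of_le' hn
  rfl

theorem add_nmul {m n : ℕ} (hm : 1 ≤ m) (hn : 1 ≤ n) (a : S) :
    nmul (m + n) a = nmul m a + nmul n a := by
  induction n, hn using Nat.le_induction with
  | base => exact nmul_succ hm a
  | succ n hn ih => rw [← add_assoc, nmul_succ (by omega), ih, nmul_succ hn, add_assoc]

theorem mul_nmul {m n : ℕ} (hm : 1 ≤ m) (hn : 1 ≤ n) (a : S) :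
    nmul (m * n) a = nmul m (nmul n a) := by
  induction m, hm using Nat.le_induction with
  | base => rw [one_mul, nmul_one]
  | succ m hm ih =>
    rw [add_one_mul, add_nmul (Nat.mul_pos hm hn) hn, ih, nmul_succ hm]

theorem nmul_eq_self_of_add_self {a : S} (h : a + a = a) : ∀ n, nmul n a = a
  | 0 => rfl
  | 1 => rfl
  | n + 2 => by rw [nmul_add_two, nmul_eq_self_of_add_self h (n + 1), h]

theorem nmul_add_of_dvd {a : S} {k d q r : ℕ} (hk : 1 ≤ k) (h : nmul (k + d) a = nmul k a)
    (hq : k ≤ q) (hr : d ∣ r) : nmul (q + r) a = nmul q a := by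
  have step : ∀ q, k ≤ q → nmul (q + d) a = nmul q a := by
    intro q hq
    obtain ⟨j, rfl⟩ := Nat.exists_eq_add_of_le hq
    rcases Nat.eq_zero_or_pos j with rfl | hj
    · exact h
    · rw [add_right_comm, add_nmul (by omega) hj, h, ← add_nmul hk hj]
  obtain ⟨t, rfl⟩ := hr
  induction t with
  | zero => rfl
  | succ t ih => rw [mul_add_one, ← add_assoc, step _ (by omega), ih]

end AddSemigroup

theorem nmul_add [AddCommSemigroup S] : ∀ (n : ℕ) (a b : S), nmul n (a + b) = nmul n a + nmul n b
  | 0, _, _ => rfl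
  | 1, _, _ => rfl
  | n + 2, a, b => by rw [nmul_add_two, nmul_add_two, nmul_add_two, nmul_add, add_add_add_comm]

section Semigroup

variable [Semigroup S]

theorem npow1_one (a : S) : npow1 1 a = a := rfl

theorem npow1_succ {n : ℕ} (hn : 1 ≤ n) (a : S) : npow1 (n + 1) a = npow1 n a * a := by
  obtain ⟨n, rfl⟩ := Nat.exists_eq_add_of_le' hn
  rfl

theorem npow1_add {m n : ℕ} (hm : 1 ≤ m) (hn : 1 ≤ n) (a : S) :
    npow1 (m + n) a = npow1 m a * npow1 n a := by
  induction n, hn using Nat.le_induction with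
  | base => exact npow1_succ hm a
  | succ n hn ih => rw [← add_assoc, npow1_succ (by omega), ih, npow1_succ hn, mul_assoc]

end Semigroup

section Distrib

variable [AddSemigroup S] [CommSemigroup S] [RightDistribClass S]

theorem nmul_mul_assoc : ∀ (n : ℕ) (a b : S), nmul n a * b = nmul n (a * b)
  | 0, _, _ => rfl
  | 1, _, _ => rfl
  | n + 2, a, b => by rw [nmul_add_two, nmul_add_two, add_mul, nmul_mul_assoc]

theorem nmul_mul_nmul {m n : ℕ} (hm : 1 ≤ m) (hn : 1 ≤ n) (a b : S) :
    nmul m a * nmul n b = nmul (m * n) (a * b) := by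
  rw [nmul_mul_assoc, mul_comm a, nmul_mul_assoc, mul_comm b, ← mul_nmul hm hn]

theorem npow1_nmul {m n : ℕ} (hm : 1 ≤ m) (hn : 1 ≤ n) (a : S) :
    npow1 m (nmul n a) = nmul (n ^ m) (npow1 m a) := by
  induction m, hm using Nat.le_induction with
  | base => rw [pow_one, npow1_one, npow1_one]
  | succ m hm ih =>
    rw [npow1_succ hm, ih, nmul_mul_nmul (Nat.one_le_pow _ _ hn) hn, ← pow_succ,
      ← npow1_succ hm]

end Distrib

end Multiples

theorem genClosure_subset {S : Type*} [Add S] [Mul S] {A T : Set S} (hA : A ⊆ T)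
    (hadd : ∀ x ∈ T, ∀ y ∈ T, x + y ∈ T) (hmul : ∀ x ∈ T, ∀ y ∈ T, x * y ∈ T) :
    genClosure A ⊆ T :=
  Set.sInter_subset_of_mem ⟨hA, hadd, hmul⟩

section AddSubsemigroups

variable {S : Type*} [AddCommSemigroup S]

variable (S) in
def addIdempotents : AddSubsemigroup S where
  carrier := {a | a + a = a}
  add_mem' {a b} (ha : a + a = a) (hb : b + b = b) :=
    show a + b + (a + b) = a + b by rw [add_add_add_comm, ha, hb]

def periodicElems (k d : ℕ) : AddSubsemigroup S where
  carrier := {a | nmul (k + d) a = nmul k a}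
  add_mem' {a b} (ha : nmul (k + d) a = nmul k a) (hb : nmul (k + d) b = nmul k b) :=
    show nmul (k + d) (a + b) = nmul k (a + b) by rw [nmul_add, nmul_add, ha, hb]

theorem mem_addIdempotents {a : S} : a ∈ addIdempotents S ↔ a + a = a := Iff.rfl

theorem mem_periodicElems {k d : ℕ} {a : S} :
    a ∈ periodicElems k d ↔ nmul (k + d) a = nmul k a :=
  Iff.rfl

end AddSubsemigroups

section PowSpan

variable {S : Type*} [AddCommSemigroup S] [CommSemigroup S]

/-- In the semiring generated by `w`, these are the polynomials in `w` without terms of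
degree `< δ`. -/
def powSpan (w : S) (δ : ℕ) : AddSubsemigroup S :=
  AddSubsemigroup.closure {y | ∃ e, δ ≤ e ∧ y = npow1 e w}

variable {w : S}

theorem npow1_mem_powSpan_of_le {δ e : ℕ} (h : δ ≤ e) : npow1 e w ∈ powSpan w δ :=
  AddSubsemigroup.subset_closure ⟨e, h, rfl⟩

theorem powSpan_antitone : Antitone (powSpan w) := fun _ _ h =>
  AddSubsemigroup.closure_mono fun _ ⟨e, he, hy⟩ => ⟨e, h.trans he, hy⟩

theorem powSpan_le_of_mul_mem {T : AddSubsemigroup S} (hT : ∀ a ∈ T, ∀ c, a * c ∈ T)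
    {m : ℕ} (hm : 1 ≤ m) (h : npow1 m w ∈ T) : powSpan w m ≤ T := by
  refine AddSubsemigroup.closure_le.mpr ?_
  rintro _ ⟨e, he, rfl⟩
  obtain rfl | hlt := he.eq_or_lt
  · exact h
  · rw [← Nat.add_sub_cancel' hlt.le, npow1_add hm (by omega)]
    exact hT _ h _

theorem add_self_or_of_mem_powSpan {δ : ℕ}
    (h : ∀ e, δ < e → npow1 e w + npow1 e w = npow1 e w) {s : S} (hs : s ∈ powSpan w δ) :
    s + s = s ∨ ∃ n ≥ 1, s + s = nmul n (npow1 δ w) + s := by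
  induction hs using AddSubsemigroup.closure_induction with
  | mem x hx =>
    obtain ⟨e, he, rfl⟩ := hx
    obtain rfl | hlt := he.eq_or_lt
    · exact Or.inr ⟨1, le_rfl, rfl⟩
    · exact Or.inl (h e hlt)
  | add x y _ _ hx hy =>
    rw [add_add_add_comm]
    rcases hx with hx | ⟨n, hn, hx⟩ <;> rcases hy with hy | ⟨n', hn', hy⟩
    · exact Or.inl (by rw [hx, hy])
    · exact Or.inr ⟨n', hn', by rw [hx, hy, add_left_comm]⟩
    · exact Or.inr ⟨n, hn, by rw [hx, hy, add_assoc]⟩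
    · exact Or.inr ⟨n + n', by omega, by rw [hx, hy, add_add_add_comm, add_nmul hn hn']⟩

variable [LeftDistribClass S] [RightDistribClass S]

theorem mul_mem_powSpan {a b : ℕ} (ha : 1 ≤ a) (hb : 1 ≤ b) {s t : S} (hs : s ∈ powSpan w a)
    (ht : t ∈ powSpan w b) : s * t ∈ powSpan w (a + b) := by
  induction hs using AddSubsemigroup.closure_induction with
  | add x y _ _ hx hy => rw [add_mul]; exact add_mem hx hy
  | mem x hx =>
    obtain ⟨e, he, rfl⟩ := hx
    induction ht using AddSubsemigroup.closure_induction with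
    | add y z _ _ hy hz => rw [mul_add]; exact add_mem hy hz
    | mem y hy =>
      obtain ⟨f, hf, rfl⟩ := hy
      rw [← npow1_add (by omega) (by omega)]
      exact npow1_mem_powSpan_of_le (by omega)

theorem npow1_mem_powSpan {a m : ℕ} (ha : 1 ≤ a) (hm : 1 ≤ m) {s : S} (hs : s ∈ powSpan w a) :
    npow1 m s ∈ powSpan w (a * m) := by
  induction m, hm using Nat.le_induction with
  | base => rwa [mul_one]
  | succ m hm ih =>
    rw [npow1_succ hm, mul_add_one]
    exact mul_mem_powSpan (Nat.mul_pos ha hm) ha ih hs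

theorem mem_powSpan_one (hgen : genClosure {w} = Set.univ) (s : S) : s ∈ powSpan w 1 := by
  refine genClosure_subset ?_ (fun x hx y hy => add_mem hx hy) (fun x hx y hy => ?_)
    (hgen ▸ Set.mem_univ s)
  · exact Set.singleton_subset_iff.mpr (npow1_mem_powSpan_of_le le_rfl)
  · exact powSpan_antitone (by norm_num) (mul_mem_powSpan le_rfl le_rfl hx hy)

end PowSpan

section Divisible

variable {S : Type*} [AddCommSemigroup S] [CommSemigroup S] [LeftDistribClass S]
  [RightDistribClass S] {w : S}

theorem npow1_mem_powSpan_self (hgen : genClosure {w} = Set.univ) {m : ℕ} (hm : 1 ≤ m) (b : S) :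
    npow1 m b ∈ powSpan w m := by
  simpa only [one_mul] using npow1_mem_powSpan le_rfl hm (mem_powSpan_one hgen b)

theorem add_self_of_nmul_eq (hdiv : ∀ n, 1 ≤ n → ∃ b : S, nmul n b = w)
    (hgen : genClosure {w} = Set.univ) {m k d : ℕ} (hm : 1 ≤ m) (hk : 1 ≤ k) (hd : 1 ≤ d)
    (h : nmul (k + d) (npow1 m w) = nmul k (npow1 m w)) :
    npow1 m w + npow1 m w = npow1 m w := by
  obtain ⟨b, hb⟩ := hdiv (k * d) (Nat.mul_pos hk hd)
  have hw : npow1 m w = nmul ((k * d) ^ m) (npow1 m b) := by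
    rw [← hb, npow1_nmul hm (Nat.mul_pos hk hd)]
  have hper : npow1 m b ∈ periodicElems k d := by
    refine powSpan_le_of_mul_mem (fun a ha c => ?_) hm h (npow1_mem_powSpan_self hgen hm b)
    rw [mem_periodicElems] at ha ⊢
    rw [← nmul_mul_assoc, ha, nmul_mul_assoc]
  have hkN : k ≤ (k * d) ^ m :=
    (Nat.le_mul_of_pos_right k hd).trans (Nat.le_self_pow (by omega) _)
  have hN : 1 ≤ (k * d) ^ m := hk.trans hkN
  rw [hw, ← add_nmul hN hN, nmul_add_of_dvd hk hper hkN ((dvd_mul_left d k).pow (by omega))]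

theorem add_self_npow1_of_forall_lt (hdiv : ∀ n, 1 ≤ n → ∃ b : S, nmul n b = w)
    (hgen : genClosure {w} = Set.univ) {δ : ℕ} (hδ : 1 ≤ δ)
    (h : ∀ e, δ < e → npow1 e w + npow1 e w = npow1 e w) :
    npow1 δ w + npow1 δ w = npow1 δ w := by
  obtain ⟨b, hb⟩ := hdiv 2 (by norm_num)
  have hw : npow1 δ w = nmul (2 ^ δ) (npow1 δ b) := by rw [← hb, npow1_nmul hδ (by norm_num)]
  rcases add_self_or_of_mem_powSpan h (npow1_mem_powSpan_self hgen hδ b) with hs | ⟨n, hn, hs⟩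
  · rw [hw, nmul_eq_self_of_add_self hs, hs]
  · have hA : 2 ≤ 2 ^ δ * n :=
      calc 2 ≤ 2 ^ δ := Nat.le_self_pow (by omega) 2
        _ ≤ 2 ^ δ * n := Nat.le_mul_of_pos_right _ hn
    refine add_self_of_nmul_eq hdiv hgen hδ (k := 2) (d := 2 ^ δ * n - 1) (by norm_num)
      (by omega) ?_
    calc nmul (2 + (2 ^ δ * n - 1)) (npow1 δ w)
        = nmul (2 ^ δ * n) (npow1 δ w) + npow1 δ w := by
          rw [← nmul_succ (by omega)]
          congr 1
          omega
      _ = nmul (2 ^ δ) (nmul n (npow1 δ w) + npow1 δ b) := by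
          rw [nmul_add, ← mul_nmul Nat.one_le_two_pow hn, ← hw]
      _ = nmul 2 (npow1 δ w) := by rw [← hs, nmul_add, ← hw, nmul_two]

theorem add_self_npow1_of_add_self (hdiv : ∀ n, 1 ≤ n → ∃ b : S, nmul n b = w)
    (hgen : genClosure {w} = Set.univ) {m : ℕ} (hm : 1 ≤ m)
    (h : npow1 m w + npow1 m w = npow1 m w) {e : ℕ} (he : 1 ≤ e) :
    npow1 e w + npow1 e w = npow1 e w := by
  have high : ∀ e, m ≤ e → npow1 e w ∈ addIdempotents S := by
    refine fun e he => powSpan_le_of_mul_mem (fun a ha c => ?_) hm h (npow1_mem_powSpan_of_le he)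
    rw [mem_addIdempotents] at ha ⊢
    rw [← add_mul, ha]
  suffices ∀ i e, 1 ≤ e → m ≤ e + i → npow1 e w + npow1 e w = npow1 e w from
    this m e he (by omega)
  intro i
  induction i with
  | zero => exact fun e _ hme => high e hme
  | succ i ih =>
    intro e he hme
    by_cases hi : m ≤ e + i
    · exact ih e he hi
    · exact add_self_npow1_of_forall_lt hdiv hgen he fun e' he' => ih e' (by omega) (by omega)

end Divisible

theorem stmt_16 {S : Type*} [AddCommSemigroup S] [CommSemigroup S]
    (hdl : ∀ a b c : S, a * (b + c) = a * b + a * c)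
    (hdr : ∀ a b c : S, (a + b) * c = a * c + b * c)
    (hdiv : ∀ a : S, ∀ n : ℕ, 1 ≤ n → ∃ b : S, nmul n b = a)
    (w : S) (hgen : genClosure {w} = Set.univ)
    (hfin : ∃ m : ℕ, 1 ≤ m ∧ ∃ k l : ℕ, 1 ≤ k ∧ 1 ≤ l ∧ k ≠ l ∧
      nmul k (npow1 m w) = nmul l (npow1 m w)) :
    ∀ a : S, a + a = a := by
  have : LeftDistribClass S := ⟨hdl⟩
  have : RightDistribClass S := ⟨hdr⟩
  have hdivw := fun n => hdiv w n
  obtain ⟨m, hm, k, l, hk, hl, hkl, h⟩ := hfin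
  have hx : npow1 m w + npow1 m w = npow1 m w := by
    rcases hkl.lt_or_gt with hlt | hlt
    · exact add_self_of_nmul_eq hdivw hgen hm hk (d := l - k) (by omega)
        (by rw [Nat.add_sub_cancel' hlt.le, h])
    · exact add_self_of_nmul_eq hdivw hgen hm hl (d := k - l) (by omega)
        (by rw [Nat.add_sub_cancel' hlt.le, h])
  have hpowers : powSpan w 1 ≤ addIdempotents S := by
    refine AddSubsemigroup.closure_le.mpr ?_
    rintro _ ⟨e, he, rfl⟩
    exact add_self_npow1_of_add_self hdivw hgen hm hx he
  exact fun a => hpowers (mem_powSpan_one hgen a)
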